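/- arXiv:1909.03633 — 2 statements merged into one kernel-verified Lean document; each statement's English description precedes it below -/
import Mathlib

section
/- Any two solutions v₁, v₂ ∈ C²(Ω) ∩ C⁰(Ω̄) of the nonlocal problem ε²Δv = (m/∫_Ω e^v dx) v e^v in Ω, v = u₀ on ∂Ω, with m, u₀, ε > 0 positive constants, are equal: v₁ ≡ v₂. -/
/-!
If `v₂ - v₁` had a positive maximum `M` on `closure Ω`, it would be attained at an interior
point `x`, since both solutions equal `u₀` on `∂Ω`. There `Δ(v₂ - v₁) ≤ 0`, so the right-hand
side of the equation for `v₂` is at most that for `v₁`. But `∫ e^{v₂} ≤ e^M ∫ e^{v₁}` and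
`v₂ x = v₁ x + M > 0` force `m / ∫ e^{v₂} · v₂ e^{v₂} > m / ∫ e^{v₁} · v₁ e^{v₁}` at `x`.
Exchanging the roles of the two solutions gives `v₁ = v₂`.
-/

open Real Set MeasureTheory

/-- The Euclidean Laplacian, written as the sum of second directional derivatives
along the standard basis directions. -/
noncomputable def lap {N : ℕ} (u : EuclideanSpace ℝ (Fin N) → ℝ)
    (x : EuclideanSpace ℝ (Fin N)) : ℝ :=
  ∑ i : Fin N, fderiv ℝ (fun y => fderiv ℝ u y (EuclideanSpace.single i 1)) x
    (EuclideanSpace.single i 1)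

open Filter Topology

theorem IsLocalMax.deriv_deriv_nonpos {g : ℝ → ℝ} {a : ℝ} (h : IsLocalMax g a)
    (hc : ContinuousAt g a) : deriv (deriv g) a ≤ 0 := by
  by_contra! hpos
  have hconst : g =ᶠ[𝓝 a] fun _ => g a := by
    filter_upwards [h, isLocalMin_of_deriv_deriv_pos hpos h.deriv_eq_zero hc]
      with t hle hge using le_antisymm hle hge
  simpa using hpos.trans_eq hconst.deriv.deriv_eq

section SecondDerivative

variable {E : Type*} [NormedAddCommGroup E] [NormedSpace ℝ E] {f g : E → ℝ} {a : E}

theorem IsLocalMax.fderiv_fderiv_apply_nonpos (h : IsLocalMax f a)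
    (hf : ∀ᶠ y in 𝓝 a, DifferentiableAt ℝ f y) (hf' : DifferentiableAt ℝ (fderiv ℝ f) a)
    (v : E) : fderiv ℝ (fun y => fderiv ℝ f y v) a v ≤ 0 := by
  set line : ℝ → E := fun t => a + t • v
  have hline : ∀ t, HasDerivAt line v t := fun t => by
    simpa [line] using ((hasDerivAt_id t).smul_const v).const_add a
  have hline0 : line 0 = a := by simp [line]
  have hline_tendsto : Tendsto line (𝓝 0) (𝓝 a) := hline0 ▸ (hline 0).continuousAt
  have hderiv : deriv (f ∘ line) =ᶠ[𝓝 0] fun t => fderiv ℝ f (line t) v := by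
    filter_upwards [hline_tendsto.eventually hf] with t ht
    exact (ht.hasFDerivAt.comp_hasDerivAt t (hline t)).deriv
  have hsecond : HasDerivAt (fun t => fderiv ℝ f (line t) v)
      (fderiv ℝ (fun y => fderiv ℝ f y v) a v) 0 :=
    (hf'.clm_apply (differentiableAt_const v)).hasFDerivAt.comp_hasDerivAt_of_eq 0 (hline 0)
      hline0.symm
  have hmax : IsLocalMax (f ∘ line) 0 := (hline0 ▸ h).comp_continuous (hline 0).continuousAt
  have hcont : ContinuousAt (f ∘ line) 0 :=
    hf.self_of_nhds.continuousAt.comp_of_eq (hline 0).continuousAt hline0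
  rw [← hsecond.deriv, ← hderiv.deriv_eq]
  exact hmax.deriv_deriv_nonpos hcont

theorem ContDiffAt.eventually_differentiableAt (hf : ContDiffAt ℝ 2 f a) :
    ∀ᶠ y in 𝓝 a, DifferentiableAt ℝ f y :=
  (hf.eventually (by simp)).mono fun _ hy => hy.differentiableAt two_ne_zero

theorem ContDiffAt.differentiableAt_fderiv (hf : ContDiffAt ℝ 2 f a) :
    DifferentiableAt ℝ (fderiv ℝ f) a :=
  (hf.fderiv_right (m := 1) le_rfl).differentiableAt one_ne_zero

theorem ContDiffAt.fderiv_fderiv_apply_sub (hf : ContDiffAt ℝ 2 f a) (hg : ContDiffAt ℝ 2 g a)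
    (v : E) : fderiv ℝ (fun y => fderiv ℝ (f - g) y v) a v
      = fderiv ℝ (fun y => fderiv ℝ f y v) a v - fderiv ℝ (fun y => fderiv ℝ g y v) a v := by
  have hfirst : (fun y => fderiv ℝ (f - g) y v) =ᶠ[𝓝 a]
      fun y => fderiv ℝ f y v - fderiv ℝ g y v := by
    filter_upwards [hf.eventually_differentiableAt, hg.eventually_differentiableAt]
      with y hfy hgy
    rw [fderiv_sub hfy hgy, sub_apply]
  rw [hfirst.fderiv_eq, fderiv_fun_sub, sub_apply]
  · exact hf.differentiableAt_fderiv.clm_apply (differentiableAt_const v)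
  · exact hg.differentiableAt_fderiv.clm_apply (differentiableAt_const v)

end SecondDerivative

section Laplacian

variable {N : ℕ} {u v : EuclideanSpace ℝ (Fin N) → ℝ} {x : EuclideanSpace ℝ (Fin N)}

theorem lap_nonpos_of_isLocalMax (hu : ContDiffAt ℝ 2 u x) (h : IsLocalMax u x) :
    lap u x ≤ 0 :=
  Finset.sum_nonpos fun _ _ => h.fderiv_fderiv_apply_nonpos hu.eventually_differentiableAt
    hu.differentiableAt_fderiv _

theorem lap_sub (hu : ContDiffAt ℝ 2 u x) (hv : ContDiffAt ℝ 2 v x) :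
    lap (u - v) x = lap u x - lap v x := by
  simp only [lap, ← Finset.sum_sub_distrib, hu.fderiv_fderiv_apply_sub hv]

end Laplacian

theorem exists_mem_isMaxOn_closure_of_pos {E : Type*} [PseudoMetricSpace E] [ProperSpace E]
    {Ω : Set E} (hΩopen : IsOpen Ω) (hΩbdd : Bornology.IsBounded Ω) {z : E → ℝ}
    (hz : ContinuousOn z (closure Ω)) (hbdry : ∀ x ∈ frontier Ω, z x = 0)
    {x₀ : E} (hx₀ : x₀ ∈ closure Ω) (hpos : 0 < z x₀) :
    ∃ xs ∈ Ω, IsMaxOn z (closure Ω) xs := by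
  obtain ⟨xs, hxs, hmax⟩ := hΩbdd.isCompact_closure.exists_isMaxOn ⟨x₀, hx₀⟩ hz
  refine ⟨xs, ?_, hmax⟩
  by_contra hxsΩ
  have hfr : xs ∈ frontier Ω := by rw [hΩopen.frontier_eq]; exact ⟨hxs, hxsΩ⟩
  have : z x₀ ≤ z xs := hmax hx₀
  linarith [hbdry xs hfr]

theorem Bornology.IsBounded.integrableOn_of_continuousOn_closure {E : Type*}
    [MetricSpace E] [ProperSpace E] [MeasurableSpace E] [OpensMeasurableSpace E]
    {μ : Measure E} [IsFiniteMeasureOnCompacts μ] {Ω : Set E} (hΩbdd : Bornology.IsBounded Ω)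
    {f : E → ℝ} (hf : ContinuousOn f (closure Ω)) : IntegrableOn f Ω μ :=
  (hf.integrableOn_compact hΩbdd.isCompact_closure).mono_set subset_closure

theorem setIntegral_exp_le_exp_mul {α : Type*} [MeasurableSpace α] {μ : Measure α} {s : Set α}
    (hs : MeasurableSet s) {f g : α → ℝ} (hf : IntegrableOn (fun y => exp (f y)) s μ)
    (hg : IntegrableOn (fun y => exp (g y)) s μ) {M : ℝ} (hle : ∀ y ∈ s, g y - f y ≤ M) :
    ∫ y in s, exp (g y) ∂μ ≤ exp M * ∫ y in s, exp (f y) ∂μ := by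
  rw [← integral_const_mul]
  refine setIntegral_mono_on hg (hf.const_mul _) hs fun y hy => ?_
  rw [← exp_add, exp_le_exp]
  linarith [hle y hy]

theorem IsOpen.setIntegral_exp_pos {E : Type*} [TopologicalSpace E] [MeasurableSpace E]
    {μ : Measure E} [μ.IsOpenPosMeasure] {Ω : Set E} (hΩopen : IsOpen Ω) (hne : Ω.Nonempty)
    {f : E → ℝ} (hf : IntegrableOn (fun y => exp (f y)) Ω μ) :
    0 < ∫ y in Ω, exp (f y) ∂μ :=
  have : NeZero (μ.restrict Ω) := ⟨by simpa using hΩopen.measure_ne_zero μ hne⟩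
  integral_exp_pos hf

theorem nonlocal_rhs_lt {m a b I₁ I₂ : ℝ} (hm : 0 < m) (hab : a < b) (hb : 0 < b)
    (hI₁ : 0 < I₁) (hI₂ : 0 < I₂) (hI : I₂ ≤ exp (b - a) * I₁) :
    m / I₁ * a * exp a < m / I₂ * b * exp b :=
  calc m / I₁ * a * exp a < m / I₁ * b * exp a := by gcongr
    _ = m / (exp (b - a) * I₁) * b * exp b := by rw [exp_sub]; field_simp
    _ ≤ m / I₂ * b * exp b := by gcongr

theorem nonlocal_solution_le {N : ℕ} {Ω : Set (EuclideanSpace ℝ (Fin N))}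
    (hΩopen : IsOpen Ω) (hΩbdd : Bornology.IsBounded Ω) {ε m : ℝ} (hm : 0 < m)
    {v₁ v₂ : EuclideanSpace ℝ (Fin N) → ℝ}
    (hv₁_cont : ContinuousOn v₁ (closure Ω)) (hv₂_cont : ContinuousOn v₂ (closure Ω))
    (hv₁_smooth : ContDiffOn ℝ 2 v₁ Ω) (hv₂_smooth : ContDiffOn ℝ 2 v₂ Ω)
    (hv₂_pos : ∀ x ∈ Ω, 0 < v₂ x)
    (heq₁ : ∀ x ∈ Ω, ε ^ 2 * lap v₁ x
      = m / (∫ y in Ω, Real.exp (v₁ y)) * v₁ x * Real.exp (v₁ x))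
    (heq₂ : ∀ x ∈ Ω, ε ^ 2 * lap v₂ x
      = m / (∫ y in Ω, Real.exp (v₂ y)) * v₂ x * Real.exp (v₂ x))
    (hbdry : ∀ x ∈ frontier Ω, v₁ x = v₂ x) :
    ∀ x ∈ closure Ω, v₂ x ≤ v₁ x := by
  by_contra! ⟨x₀, hx₀, hlt⟩
  obtain ⟨xs, hxs, hmax⟩ := exists_mem_isMaxOn_closure_of_pos hΩopen hΩbdd
    (hv₂_cont.sub hv₁_cont) (fun x hx => by simp [hbdry x hx]) hx₀ (sub_pos.2 hlt)
  have hlt_xs : v₁ xs < v₂ xs := sub_pos.1 ((sub_pos.2 hlt).trans_le (hmax hx₀))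
  have hΩne : Ω.Nonempty := ⟨xs, hxs⟩
  have hint₁ := hΩbdd.integrableOn_of_continuousOn_closure (μ := volume) hv₁_cont.rexp
  have hint₂ := hΩbdd.integrableOn_of_continuousOn_closure (μ := volume) hv₂_cont.rexp
  have hI : ∫ y in Ω, exp (v₂ y) ≤ exp (v₂ xs - v₁ xs) * ∫ y in Ω, exp (v₁ y) :=
    setIntegral_exp_le_exp_mul hΩopen.measurableSet hint₁ hint₂
      fun y hy => hmax (subset_closure hy)
  have hrhs := nonlocal_rhs_lt hm hlt_xs (hv₂_pos xs hxs) (hΩopen.setIntegral_exp_pos hΩne hint₁)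
    (hΩopen.setIntegral_exp_pos hΩne hint₂) hI
  have hlap : lap (v₂ - v₁) xs ≤ 0 :=
    lap_nonpos_of_isLocalMax ((hv₂_smooth.sub hv₁_smooth).contDiffAt (hΩopen.mem_nhds hxs))
      (hmax.isLocalMax (mem_of_superset (hΩopen.mem_nhds hxs) subset_closure))
  rw [lap_sub (hv₂_smooth.contDiffAt (hΩopen.mem_nhds hxs))
    (hv₁_smooth.contDiffAt (hΩopen.mem_nhds hxs))] at hlap
  linarith [heq₁ xs hxs, heq₂ xs hxs, mul_nonpos_of_nonneg_of_nonpos (sq_nonneg ε) hlap]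

theorem nonlocal_uniqueness_general {N : ℕ}
    (Ω : Set (EuclideanSpace ℝ (Fin N)))
    (hΩopen : IsOpen Ω) (hΩbdd : Bornology.IsBounded Ω)
    (ε m u₀ : ℝ) (hm : 0 < m)
    (v₁ v₂ : EuclideanSpace ℝ (Fin N) → ℝ)
    (hv₁_cont : ContinuousOn v₁ (closure Ω)) (hv₂_cont : ContinuousOn v₂ (closure Ω))
    (hv₁_smooth : ContDiffOn ℝ 2 v₁ Ω) (hv₂_smooth : ContDiffOn ℝ 2 v₂ Ω)
    (hv₁_pos : ∀ x ∈ Ω, 0 < v₁ x) (hv₂_pos : ∀ x ∈ Ω, 0 < v₂ x)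
    (heq₁ : ∀ x ∈ Ω, ε ^ 2 * lap v₁ x
      = m / (∫ y in Ω, Real.exp (v₁ y)) * v₁ x * Real.exp (v₁ x))
    (heq₂ : ∀ x ∈ Ω, ε ^ 2 * lap v₂ x
      = m / (∫ y in Ω, Real.exp (v₂ y)) * v₂ x * Real.exp (v₂ x))
    (hbdry₁ : ∀ x ∈ frontier Ω, v₁ x = u₀)
    (hbdry₂ : ∀ x ∈ frontier Ω, v₂ x = u₀) :
    ∀ x ∈ closure Ω, v₁ x = v₂ x := by
  have hbdry : ∀ x ∈ frontier Ω, v₁ x = v₂ x := fun x hx =>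
    (hbdry₁ x hx).trans (hbdry₂ x hx).symm
  intro x hx
  exact le_antisymm
    (nonlocal_solution_le hΩopen hΩbdd hm hv₂_cont hv₁_cont hv₂_smooth hv₁_smooth hv₁_pos
      heq₂ heq₁ (fun y hy => (hbdry y hy).symm) x hx)
    (nonlocal_solution_le hΩopen hΩbdd hm hv₁_cont hv₂_cont hv₁_smooth hv₂_smooth hv₂_pos
      heq₁ heq₂ hbdry x hx)

theorem nonlocal_uniqueness {N : ℕ}
    (Ω : Set (EuclideanSpace ℝ (Fin N)))
    (hΩopen : IsOpen Ω) (hΩbdd : Bornology.IsBounded Ω) (hΩconn : IsConnected Ω)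
    (ε m u₀ : ℝ) (hε : 0 < ε) (hm : 0 < m) (hu₀ : 0 < u₀)
    (v₁ v₂ : EuclideanSpace ℝ (Fin N) → ℝ)
    (hv₁_cont : ContinuousOn v₁ (closure Ω)) (hv₂_cont : ContinuousOn v₂ (closure Ω))
    (hv₁_smooth : ContDiffOn ℝ 2 v₁ Ω) (hv₂_smooth : ContDiffOn ℝ 2 v₂ Ω)
    (hv₁_pos : ∀ x ∈ Ω, 0 < v₁ x) (hv₂_pos : ∀ x ∈ Ω, 0 < v₂ x)
    (heq₁ : ∀ x ∈ Ω, ε ^ 2 * lap v₁ x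
      = m / (∫ y in Ω, Real.exp (v₁ y)) * v₁ x * Real.exp (v₁ x))
    (heq₂ : ∀ x ∈ Ω, ε ^ 2 * lap v₂ x
      = m / (∫ y in Ω, Real.exp (v₂ y)) * v₂ x * Real.exp (v₂ x))
    (hbdry₁ : ∀ x ∈ frontier Ω, v₁ x = u₀)
    (hbdry₂ : ∀ x ∈ frontier Ω, v₂ x = u₀) :
    ∀ x ∈ closure Ω, v₁ x = v₂ x :=
  nonlocal_uniqueness_general Ω hΩopen hΩbdd ε m u₀ hm v₁ v₂ hv₁_cont hv₂_cont hv₁_smooth hv₂_smooth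
    hv₁_pos hv₂_pos heq₁ heq₂ hbdry₁ hbdry₂
end

section
/- The ODE problem −Ψ'(ξ) = √(2m F(Ψ(ξ))) for ξ > 0 with Ψ(0) = u₀ > 0, where F(s) = (s−1)e^s + 1 and m > 0, has at most one positive decreasing solution Ψ with Ψ(ξ) → 0 as ξ → ∞. -/
/-!
The right-hand side `x ↦ -√(2 m F x)` is not differentiable at the equilibrium `0`, but it is
Lipschitz on every `[0, c]`: since `F' s = s eˢ`, one has `F a ≥ a² / 2` and
`F a - F b ≤ eᶜ (a² - b²) / 2` for `0 ≤ b ≤ a ≤ c`, and rationalizing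
`√(2mF a) - √(2mF b) = 2m (F a - F b) / (√(2mF a) + √(2mF b))` with `√(2mF x) ≥ √m x`
gives the constant `√m eᶜ`. Positive decreasing solutions stay in `[0, u₀]`, so Grönwall's
estimate on `[ε, ξ]`, together with continuity at `0` (where no derivative is assumed) as
`ε → 0`, forces two solutions with the same initial value to coincide.
-/

open Real Set Filter

noncomputable def Fa (s : ℝ) : ℝ := (s - 1) * Real.exp s + 1

open Topology

theorem sub_le_sub_of_hasDerivAt_le {f g f' g' : ℝ → ℝ} {a b : ℝ} (hab : a ≤ b)
    (hf : ∀ x ∈ Icc a b, HasDerivAt f (f' x) x) (hg : ∀ x ∈ Icc a b, HasDerivAt g (g' x) x)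
    (hle : ∀ x ∈ Ioo a b, f' x ≤ g' x) : f b - f a ≤ g b - g a := by
  have hmono : MonotoneOn (fun x => g x - f x) (Icc a b) := by
    refine monotoneOn_of_hasDerivWithinAt_nonneg (f' := fun x => g' x - f' x) (convex_Icc a b)
      (fun x hx => ((hg x hx).sub (hf x hx)).continuousAt.continuousWithinAt) ?_ ?_
    · intro x hx
      rw [interior_Icc] at hx
      exact ((hg x (Ioo_subset_Icc_self hx)).sub (hf x (Ioo_subset_Icc_self hx))).hasDerivWithinAt
    · intro x hx
      rw [interior_Icc] at hx
      exact sub_nonneg.2 (hle x hx)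
  have := hmono (left_mem_Icc.2 hab) (right_mem_Icc.2 hab) hab
  simp only at this
  linarith

@[simp]
theorem Fa_zero : Fa 0 = 0 := by simp [Fa]

theorem hasDerivAt_Fa (s : ℝ) : HasDerivAt Fa (s * exp s) s :=
  ((((hasDerivAt_id' s).sub_const 1).mul (hasDerivAt_exp s)).add_const 1).congr_deriv
    (by ring)

theorem hasDerivAt_const_mul_sq_div_two (k x : ℝ) :
    HasDerivAt (fun s => k * s ^ 2 / 2) (k * x) x :=
  (((hasDerivAt_pow 2 x).const_mul k).div_const 2).congr_deriv (by ring)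

theorem le_Fa_sub {a b : ℝ} (hb : 0 ≤ b) (hba : b ≤ a) :
    exp b * (a ^ 2 - b ^ 2) / 2 ≤ Fa a - Fa b := by
  have := sub_le_sub_of_hasDerivAt_le hba (fun x _ => hasDerivAt_const_mul_sq_div_two (exp b) x)
    (fun x _ => hasDerivAt_Fa x) fun x hx => by
      rw [mul_comm]
      exact mul_le_mul_of_nonneg_left (exp_le_exp.2 hx.1.le) (hb.trans hx.1.le)
  linarith

theorem Fa_sub_le {a b c : ℝ} (hb : 0 ≤ b) (hba : b ≤ a) (hac : a ≤ c) :
    Fa a - Fa b ≤ exp c * (a ^ 2 - b ^ 2) / 2 := by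
  have := sub_le_sub_of_hasDerivAt_le hba (fun x _ => hasDerivAt_Fa x)
    (fun x _ => hasDerivAt_const_mul_sq_div_two (exp c) x) fun x hx => by
      rw [mul_comm (exp c)]
      exact mul_le_mul_of_nonneg_left (exp_le_exp.2 (hx.2.le.trans hac)) (hb.trans hx.1.le)
  linarith

theorem sq_div_two_le_Fa {s : ℝ} (hs : 0 ≤ s) : s ^ 2 / 2 ≤ Fa s := by
  simpa using le_Fa_sub le_rfl hs

theorem Fa_monotoneOn : MonotoneOn Fa (Ici 0) := fun b hb a _ hba => by
  have hsq : b ^ 2 ≤ a ^ 2 := pow_le_pow_left₀ hb hba 2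
  nlinarith [le_Fa_sub hb hba, exp_pos b]

theorem sqrt_mul_le_sqrt_two_mul_Fa {m s : ℝ} (hm : 0 ≤ m) (hs : 0 ≤ s) :
    √m * s ≤ √(2 * m * Fa s) := by
  rw [le_sqrt (by positivity) (by nlinarith [sq_div_two_le_Fa hs]), mul_pow, sq_sqrt hm]
  nlinarith [sq_div_two_le_Fa hs]

theorem sqrt_two_mul_Fa_sub_le {m a b c : ℝ} (hm : 0 ≤ m) (hb : 0 ≤ b) (hba : b ≤ a)
    (hac : a ≤ c) : √(2 * m * Fa a) - √(2 * m * Fa b) ≤ √m * exp c * (a - b) := by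
  set A := √(2 * m * Fa a)
  set B := √(2 * m * Fa b)
  have hA : √m * a ≤ A := sqrt_mul_le_sqrt_two_mul_Fa hm (hb.trans hba)
  have hB : √m * b ≤ B := sqrt_mul_le_sqrt_two_mul_Fa hm hb
  have hA0 : 0 ≤ A := sqrt_nonneg _
  have hB0 : 0 ≤ B := sqrt_nonneg _
  have hk : 0 ≤ √m * exp c * (a - b) := by have := sub_nonneg.2 hba; positivity
  rcases (add_nonneg hA0 hB0).eq_or_lt with hAB | hAB
  · linarith
  refine le_of_mul_le_mul_right ?_ hAB
  calc (A - B) * (A + B) = 2 * m * (Fa a - Fa b) := by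
        have hFb := sq_div_two_le_Fa hb
        have hFa := sq_div_two_le_Fa (hb.trans hba)
        rw [show (A - B) * (A + B) = A ^ 2 - B ^ 2 by ring, sq_sqrt (by nlinarith),
          sq_sqrt (by nlinarith)]
        ring
    _ ≤ 2 * m * (exp c * (a ^ 2 - b ^ 2) / 2) := by gcongr; exact Fa_sub_le hb hba hac
    _ = √m * exp c * (a - b) * (√m * a + √m * b) := by
        rw [show √m * exp c * (a - b) * (√m * a + √m * b)
          = √m * √m * exp c * (a - b) * (a + b) by ring, mul_self_sqrt hm]
        ring
    _ ≤ √m * exp c * (a - b) * (A + B) := by gcongr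

theorem lipschitzOnWith_neg_sqrt_two_mul_Fa {m : ℝ} (hm : 0 ≤ m) (c : ℝ) :
    LipschitzOnWith (√m * exp c).toNNReal (fun x => -√(2 * m * Fa x)) (Icc 0 c) := by
  refine LipschitzOnWith.of_le_add_mul' _ fun x hx y hy => ?_
  rw [Real.dist_eq]
  rcases le_total x y with hxy | hyx
  · have := sqrt_two_mul_Fa_sub_le hm hx.1 hxy hy.2
    rw [abs_of_nonpos (sub_nonpos.2 hxy)]
    linarith
  · have : √(2 * m * Fa y) ≤ √(2 * m * Fa x) :=
      sqrt_le_sqrt (by gcongr; exact Fa_monotoneOn hy.1 hx.1 hyx)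
    have : 0 ≤ √m * exp c * |x - y| := by positivity
    linarith

section ODE

variable {E : Type*} [NormedAddCommGroup E] [NormedSpace ℝ E]
  {v : ℝ → E → E} {s : ℝ → Set E} {K : NNReal} {f g : ℝ → E} {a b : ℝ}

theorem ODE_solution_unique_of_mem_Icc_right_of_Ioo
    (hv : ∀ t ∈ Ioo a b, LipschitzOnWith K (v t) (s t))
    (hf : ContinuousOn f (Icc a b))
    (hf' : ∀ t ∈ Ioo a b, HasDerivWithinAt f (v t (f t)) (Ici t) t)
    (hfs : ∀ t ∈ Ioo a b, f t ∈ s t)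
    (hg : ContinuousOn g (Icc a b))
    (hg' : ∀ t ∈ Ioo a b, HasDerivWithinAt g (v t (g t)) (Ici t) t)
    (hgs : ∀ t ∈ Ioo a b, g t ∈ s t)
    (ha : f a = g a) :
    EqOn f g (Icc a b) := by
  intro t ht
  rcases ht.1.eq_or_lt with rfl | hat
  · exact ha
  have hbound :
      ∀ ε ∈ Ioo a t, dist (f t) (g t) ≤ dist (f ε) (g ε) * exp (K * (t - a)) := by
    intro ε hε
    have hsub : Ico ε t ⊆ Ioo a b := fun x hx => ⟨hε.1.trans_le hx.1, hx.2.trans_le ht.2⟩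
    have hIcc : Icc ε t ⊆ Icc a b := Icc_subset_Icc hε.1.le ht.2
    calc dist (f t) (g t) ≤ dist (f ε) (g ε) * exp (K * (t - ε)) :=
          dist_le_of_trajectories_ODE_of_mem (fun x hx => hv x (hsub hx)) (hf.mono hIcc)
            (fun x hx => hf' x (hsub hx)) (fun x hx => hfs x (hsub hx)) (hg.mono hIcc)
            (fun x hx => hg' x (hsub hx)) (fun x hx => hgs x (hsub hx)) le_rfl t
            ⟨hε.2.le, le_rfl⟩
      _ ≤ dist (f ε) (g ε) * exp (K * (t - a)) := by gcongr; exact hε.1.le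
  have hnhds : 𝓝[>] a ≤ 𝓝[Icc a b] a :=
    nhdsWithin_le_of_mem (Icc_mem_nhdsGT (hat.trans_le ht.2))
  have hlim : Tendsto (fun ε => dist (f ε) (g ε) * exp (K * (t - a))) (𝓝[>] a) (𝓝 0) := by
    have hdist := ((hf a ⟨le_rfl, ht.1.trans ht.2⟩).tendsto.mono_left hnhds).dist
      ((hg a ⟨le_rfl, ht.1.trans ht.2⟩).tendsto.mono_left hnhds)
    simpa [ha] using hdist.mul_const (exp (K * (t - a)))
  exact dist_le_zero.1 (ge_of_tendsto hlim (eventually_of_mem (Ioo_mem_nhdsGT hat) hbound))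

end ODE

theorem ode_uniqueness_general (m u₀ : ℝ) (hm : 0 < m)
    (Ψ₁ Ψ₂ : ℝ → ℝ)
    (h₁_cont : ContinuousOn Ψ₁ (Set.Ici 0)) (h₂_cont : ContinuousOn Ψ₂ (Set.Ici 0))
    (h₁_deriv : ∀ ξ > (0 : ℝ), HasDerivAt Ψ₁ (-Real.sqrt (2 * m * Fa (Ψ₁ ξ))) ξ)
    (h₂_deriv : ∀ ξ > (0 : ℝ), HasDerivAt Ψ₂ (-Real.sqrt (2 * m * Fa (Ψ₂ ξ))) ξ)
    (h₁0 : Ψ₁ 0 = u₀) (h₂0 : Ψ₂ 0 = u₀)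
    (h₁_pos : ∀ ξ ∈ Set.Ici (0 : ℝ), 0 < Ψ₁ ξ) (h₂_pos : ∀ ξ ∈ Set.Ici (0 : ℝ), 0 < Ψ₂ ξ)
    (h₁_anti : AntitoneOn Ψ₁ (Set.Ici 0)) (h₂_anti : AntitoneOn Ψ₂ (Set.Ici 0)) :
    Set.EqOn Ψ₁ Ψ₂ (Set.Ici 0) := by
  intro ξ hξ
  have hmem : ∀ Ψ : ℝ → ℝ, (∀ ξ ∈ Ici (0 : ℝ), 0 < Ψ ξ) → AntitoneOn Ψ (Ici 0) → Ψ 0 = u₀ →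
      ∀ t ∈ Ioo 0 ξ, Ψ t ∈ Icc 0 u₀ := fun Ψ hpos hanti h0 t ht =>
    ⟨(hpos t ht.1.le).le, h0 ▸ hanti self_mem_Ici ht.1.le ht.1.le⟩
  exact ODE_solution_unique_of_mem_Icc_right_of_Ioo (v := fun _ x => -√(2 * m * Fa x))
    (fun _ _ => lipschitzOnWith_neg_sqrt_two_mul_Fa hm.le u₀)
    (h₁_cont.mono Icc_subset_Ici_self) (fun t ht => (h₁_deriv t ht.1).hasDerivWithinAt)
    (hmem Ψ₁ h₁_pos h₁_anti h₁0)
    (h₂_cont.mono Icc_subset_Ici_self) (fun t ht => (h₂_deriv t ht.1).hasDerivWithinAt)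
    (hmem Ψ₂ h₂_pos h₂_anti h₂0)
    (h₁0.trans h₂0.symm) ⟨hξ, le_rfl⟩

theorem ode_uniqueness (m u₀ : ℝ) (hm : 0 < m) (hu₀ : 0 < u₀)
    (Ψ₁ Ψ₂ : ℝ → ℝ)
    (h₁_cont : ContinuousOn Ψ₁ (Set.Ici 0)) (h₂_cont : ContinuousOn Ψ₂ (Set.Ici 0))
    (h₁_deriv : ∀ ξ > (0 : ℝ), HasDerivAt Ψ₁ (-Real.sqrt (2 * m * Fa (Ψ₁ ξ))) ξ)
    (h₂_deriv : ∀ ξ > (0 : ℝ), HasDerivAt Ψ₂ (-Real.sqrt (2 * m * Fa (Ψ₂ ξ))) ξ)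
    (h₁0 : Ψ₁ 0 = u₀) (h₂0 : Ψ₂ 0 = u₀)
    (h₁_pos : ∀ ξ ∈ Set.Ici (0 : ℝ), 0 < Ψ₁ ξ) (h₂_pos : ∀ ξ ∈ Set.Ici (0 : ℝ), 0 < Ψ₂ ξ)
    (h₁_anti : AntitoneOn Ψ₁ (Set.Ici 0)) (h₂_anti : AntitoneOn Ψ₂ (Set.Ici 0))
    (h₁_lim : Tendsto Ψ₁ atTop (nhds 0)) (h₂_lim : Tendsto Ψ₂ atTop (nhds 0)) :
    Set.EqOn Ψ₁ Ψ₂ (Set.Ici 0) :=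
  ode_uniqueness_general m u₀ hm Ψ₁ Ψ₂ h₁_cont h₂_cont h₁_deriv h₂_deriv h₁0 h₂0 h₁_pos h₂_pos
    h₁_anti h₂_anti
end
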